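/- arXiv:1408.4293 — 2 statements merged into one kernel-verified Lean document; each statement's English description precedes it below -/
import Mathlib

section
/- Let p be a prime, n ≥ 1, and let r be an integer coprime to p whose multiplicative order modulo p^n equals φ(p^n)/2, where φ is Euler's phi function. If j is an integer with 0 < j < p^n and jr ≡ j (mod p^n), then either p = 2, n ≥ 2 and j ∈ {2^{n−2}, 2^{n−1}, 3·2^{n−2}}, or p = 3 and j ∈ {3^{n−1}, 2·3^{n−1}}. -/
lemma aux_pow_succ_dvd (p : ℕ) (hp : p.Prime) (m : ℕ) (hm : 1 ≤ m) (s : ℤ)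
    (h : (p : ℤ) ^ m ∣ s - 1) : (p : ℤ) ^ (m + 1) ∣ s ^ p - 1 := by
  have h1 : s ^ p - 1 = (∑ i ∈ Finset.range p, s ^ i) * (s - 1) := (geom_sum_mul s p).symm
  have hps : (p : ℤ) ∣ s - 1 := dvd_trans (dvd_pow_self (p : ℤ) (by omega)) h
  have hs1 : (s : ZMod p) = 1 := by
    have := (ZMod.intCast_zmod_eq_zero_iff_dvd (s - 1) p).mpr hps
    push_cast at this
    linear_combination this
  have hsum : (p : ℤ) ∣ ∑ i ∈ Finset.range p, s ^ i := by
    rw [← ZMod.intCast_zmod_eq_zero_iff_dvd]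
    push_cast
    simp [hs1, CharP.cast_eq_zero]
  rw [h1, pow_succ]
  calc (p:ℤ)^m * (p:ℤ) ∣ (s-1) * (∑ i ∈ Finset.range p, s ^ i) := mul_dvd_mul h hsum
    _ = (∑ i ∈ Finset.range p, s ^ i) * (s - 1) := by ring

lemma aux_pow_dvd (p : ℕ) (hp : p.Prime) (k : ℕ) (hk : 1 ≤ k) (s : ℤ)
    (h : (p : ℤ) ^ k ∣ s - 1) : ∀ a, (p : ℤ) ^ (k + a) ∣ s ^ (p ^ a) - 1 := by
  intro a
  induction a with
  | zero => simpa using h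
  | succ a ih =>
    have h9 := aux_pow_succ_dvd p hp (k + a) (by omega) (s ^ (p ^ a)) ih
    rw [← pow_mul, ← pow_succ] at h9
    have heq : k + (a + 1) = k + a + 1 := by omega
    rwa [heq]

/-- Let `p` be a prime, `n ≥ 1`, and let `r` be an integer coprime to `p`
whose multiplicative order modulo `p ^ n` equals `φ(p ^ n) / 2` (in particular `φ(p ^ n)` is
even).  If `j` is an integer with `0 < j < p ^ n` and `j * r ≡ j (mod p ^ n)`, then either
`p = 2`, `n ≥ 2` and `j ∈ {2 ^ (n - 2), 2 ^ (n - 1), 3 * 2 ^ (n - 2)}`, or `p = 3` and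
`j ∈ {3 ^ (n - 1), 2 * 3 ^ (n - 1)}`. -/
theorem fixed_points_of_half_order_residue
    (p n : ℕ) (hp : p.Prime) (hn : 1 ≤ n) (r : ℤ)
    (hcop : Int.gcd r (p : ℤ) = 1)
    (heven : Even ((p ^ n).totient))
    (hord : orderOf ((r : ZMod (p ^ n))) = (p ^ n).totient / 2) :
    ∀ j : ℕ, 0 < j → j < p ^ n → (j : ℤ) * r ≡ (j : ℤ) [ZMOD ((p : ℤ) ^ n)] →
      (p = 2 ∧ 2 ≤ n ∧ (j = 2 ^ (n - 2) ∨ j = 2 ^ (n - 1) ∨ j = 3 * 2 ^ (n - 2))) ∨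
      (p = 3 ∧ (j = 3 ^ (n - 1) ∨ j = 2 * 3 ^ (n - 1))) := by
  intro j hj0 hjn hmod
  have hp1 : 1 < p := hp.one_lt
  -- p-adic valuation of j
  set v := j.factorization p with hv
  have hvdvd : p ^ v ∣ j := Nat.ordProj_dvd j p
  have hvm : ¬ p ∣ j / p ^ v := Nat.not_dvd_ordCompl hp hj0.ne'
  have hjeq : p ^ v * (j / p ^ v) = j := Nat.ordProj_mul_ordCompl_eq_self j p
  set m := j / p ^ v with hm
  have hvlt : v < n := by
    have h1 : p ^ v ≤ j := Nat.le_of_dvd hj0 hvdvd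
    have := lt_of_le_of_lt h1 hjn
    exact (Nat.pow_lt_pow_iff_right hp1).mp this
  -- p^n ∣ j * (r - 1)
  have hd : (p : ℤ) ^ n ∣ (j : ℤ) * (r - 1) := by
    have := hmod.dvd
    rw [Int.ModEq] at hmod
    have h2 : ((p : ℤ) ^ n) ∣ (j : ℤ) * r - (j : ℤ) := Int.ModEq.dvd hmod.symm
    calc (p:ℤ)^n ∣ (j:ℤ) * r - j := h2
      _ = (j:ℤ) * (r - 1) := by ring
  -- cancel p^v
  have hcancel : (p : ℤ) ^ (n - v) ∣ r - 1 := by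
    have hjZ : (j : ℤ) = (p : ℤ) ^ v * (m : ℤ) := by
      rw [← hjeq]; push_cast; ring
    have h3 : (p : ℤ) ^ v * ((p : ℤ) ^ (n - v)) ∣ (p : ℤ) ^ v * ((m : ℤ) * (r - 1)) := by
      rw [← pow_add]
      have : v + (n - v) = n := by omega
      rw [this]
      calc (p:ℤ)^n ∣ (j:ℤ) * (r-1) := hd
        _ = (p:ℤ)^v * ((m:ℤ) * (r - 1)) := by rw [hjZ]; ring
    have h4 : (p : ℤ) ^ (n - v) ∣ (m : ℤ) * (r - 1) :=
      (mul_dvd_mul_iff_left (pow_ne_zero v (by exact_mod_cast hp.ne_zero))).mp h3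
    have hcopm : IsCoprime ((p : ℤ) ^ (n - v)) (m : ℤ) := by
      have : Nat.Coprime p m := (Nat.Prime.coprime_iff_not_dvd hp).mpr hvm
      have h10 := Nat.isCoprime_iff_coprime.mpr (this.pow_left (n - v))
      exact_mod_cast h10
    exact hcopm.dvd_of_dvd_mul_left h4
  -- order divides p^v
  have hpow1 : ((r : ZMod (p ^ n))) ^ (p ^ v) = 1 := by
    have := aux_pow_dvd p hp (n - v) (by omega) r hcancel v
    have heq : n - v + v = n := by omega
    rw [heq] at this
    have h5 : ((r ^ (p ^ v) - 1 : ℤ) : ZMod (p ^ n)) = 0 := by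
      rw [ZMod.intCast_zmod_eq_zero_iff_dvd]
      exact_mod_cast this
    push_cast at h5
    linear_combination h5
  have hdvd : (p ^ n).totient / 2 ∣ p ^ v := by
    rw [← hord]; exact orderOf_dvd_of_pow_eq_one hpow1
  have htot : (p ^ n).totient = p ^ (n - 1) * (p - 1) := Nat.totient_prime_pow hp (by omega)
  by_cases hp2 : p = 2
  · -- p = 2
    subst hp2
    have hn2 : 2 ≤ n := by
      by_contra h
      have : n = 1 := by omega
      subst this
      simp [Nat.totient_prime Nat.prime_two] at heven
    have htot2 : (2 ^ n).totient / 2 = 2 ^ (n - 2) := by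
      rw [htot]
      have : n - 1 = (n - 2) + 1 := by omega
      rw [this]
      simp [pow_succ]
    rw [htot2] at hdvd
    have hle : n - 2 ≤ v := (Nat.pow_dvd_pow_iff_le_right one_lt_two).mp hdvd
    have hdj : 2 ^ (n - 2) ∣ j := dvd_trans (pow_dvd_pow 2 hle) hvdvd
    obtain ⟨c, hc⟩ := hdj
    have hc0 : 0 < c := by
      rcases Nat.eq_zero_or_pos c with h | h
      · subst h; simp at hc; omega
      · exact h
    have h8 : 2 ^ (n - 2) * 4 = 2 ^ n := by
      rw [show (4 : ℕ) = 2 ^ 2 from rfl, ← pow_add]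
      congr 1; omega
    have hc3 : c < 4 := by
      by_contra h
      push_neg at h
      have : 2 ^ n ≤ j := by
        calc 2 ^ n = 2 ^ (n - 2) * 4 := h8.symm
          _ ≤ 2 ^ (n - 2) * c := Nat.mul_le_mul_left _ h
          _ = j := hc.symm
      omega
    left
    refine ⟨rfl, hn2, ?_⟩
    interval_cases c
    · left; simpa using hc
    · right; left
      rw [hc, ← pow_succ]
      congr 1; omega
    · right; right
      rw [hc, Nat.mul_comm]
  · -- p odd
    have hodd : Odd p := hp.odd_of_ne_two hp2
    have h2p : 2 ∣ p - 1 := by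
      obtain ⟨t, ht⟩ := hodd; omega
    have htoth : (p ^ n).totient / 2 = p ^ (n - 1) * ((p - 1) / 2) := by
      rw [htot, Nat.mul_div_assoc _ h2p]
    rw [htoth] at hdvd
    have hhalf : (p - 1) / 2 ∣ p ^ v := dvd_trans (Dvd.intro_left _ rfl) hdvd
    have hcop2 : Nat.Coprime ((p - 1) / 2) p := by
      have h6 : Nat.Coprime (p - 1) p := by
        simp [Nat.coprime_self_sub_left hp.one_le]
      exact Nat.Coprime.coprime_dvd_left (Nat.div_dvd_of_dvd h2p) h6
    have hone : (p - 1) / 2 = 1 := Nat.Coprime.eq_one_of_dvd (hcop2.pow_right v) hhalf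
    have hp3 : p = 3 := by
      have h2le := hp.two_le
      omega
    subst hp3
    rw [hone, mul_one] at hdvd
    have hle : n - 1 ≤ v := (Nat.pow_dvd_pow_iff_le_right (by norm_num)).mp hdvd
    have hdj : 3 ^ (n - 1) ∣ j := dvd_trans (pow_dvd_pow 3 hle) hvdvd
    obtain ⟨c, hc⟩ := hdj
    have hc0 : 0 < c := by
      rcases Nat.eq_zero_or_pos c with h | h
      · subst h; simp at hc; omega
      · exact h
    have h8 : 3 ^ (n - 1) * 3 = 3 ^ n := by
      rw [← pow_succ]; congr 1; omega
    have hc3 : c < 3 := by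
      by_contra h
      push_neg at h
      have : 3 ^ n ≤ j := by
        calc 3 ^ n = 3 ^ (n - 1) * 3 := h8.symm
          _ ≤ 3 ^ (n - 1) * c := Nat.mul_le_mul_left _ h
          _ = j := hc.symm
      omega
    right
    refine ⟨rfl, ?_⟩
    interval_cases c
    · left; simpa using hc
    · right; rw [hc, Nat.mul_comm]
end

section
/- Let p be a prime and G a finite abelian p-group. Then the rank of 𝒰(ℤ[G]) is nonzero (equivalently, 𝒰(ℤ[G]) is infinite) if and only if G has a cyclic quotient of order at least 5, equivalently if and only if the exponent of G is at least 5. -/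
/-!
If the exponent of the `p`-group `G` is at least `5`, then `G` has an element `g` of order
`n = 8` or of odd order `n ≥ 5`. Put `N = 1 + g + ⋯ + g^(n-1)` and choose `k * l = n + 1` with
`k ^ m ≡ 1 [MOD n]` (`k = 3, m = 2` for `n = 8`; `k = 2, m = φ n` for odd `n`). Then the Bass
element `(1 + g + ⋯ + g^(k-1))^m + a N` is a unit for a suitable `a ∈ ℤ`, and a character sending
`g` to `exp (2πi/n)` maps it to a complex number of modulus `> 1`, so it has infinite order.

If the exponent is at most `4`, it divides `4` or `3`, so all character values lie in `ℤ[i]` or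
`ℤ[ω]`, where `|z|²` is an integer. For a unit `u`, `|χ u|² |χ u⁻¹|² = 1` then gives `|χ u|² = 1`
for every character `χ`, and Parseval's identity gives `∑ g, u_g² = 1`, leaving finitely many
units (Higman).

A character `χ` for which `χ g` has the order of `g` realises a cyclic quotient `G ⧸ ker χ` of
order at least `orderOf g`; this relates cyclic quotients to the exponent.
-/

open Finset MonoidAlgebra ComplexConjugate

section BassUnit

variable {R : Type*} [CommRing R]

theorem exists_isUnit_pow_add_mul {A B N : R} {n k l : ℤ} (m : ℕ)
    (hN : N * N = n * N) (hA : A * N = k * N) (hB : B * N = l * N) (hAB : A * B = 1 + N)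
    (hkl : k * l = n + 1) (hk : k ^ m ≡ 1 [ZMOD n]) :
    ∃ a : ℤ, IsUnit (A ^ m + a * N) := by
  have hpow {X : R} {c : ℤ} (h : X * N = c * N) (t : ℕ) : X ^ t * N = (c : R) ^ t * N := by
    induction t with
    | zero => simp
    | succ t ih => linear_combination X * ih + (c : R) ^ t * h
  have hl : l ^ m ≡ 1 [ZMOD n] :=
    calc l ^ m = 1 * l ^ m := (one_mul _).symm
      _ ≡ k ^ m * l ^ m [ZMOD n] := hk.symm.mul_right _
      _ = (n + 1) ^ m := by rw [← mul_pow, hkl]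
      _ ≡ 1 ^ m [ZMOD n] := (Int.modEq_iff_dvd.2 ⟨-1, by ring⟩).pow m
      _ = 1 := one_pow m
  have hpow_one_add (t : ℕ) : ∃ c : ℤ, (1 + N) ^ t = 1 + c * N := by
    induction t with
    | zero => exact ⟨0, by simp⟩
    | succ t ih =>
      obtain ⟨c, hc⟩ := ih
      exact ⟨c + 1 + c * n, by rw [pow_succ, hc]; push_cast; linear_combination (c : R) * hN⟩
  obtain ⟨a, ha⟩ := hk.dvd
  obtain ⟨b, hb⟩ := hl.dvd
  obtain ⟨c, hc⟩ := hpow_one_add m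
  set u := A ^ m + a * N
  set v := B ^ m + b * N
  have ha' : (1 : R) - k ^ m = n * a := by exact_mod_cast congrArg (Int.cast : ℤ → R) ha
  have hb' : (1 : R) - l ^ m = n * b := by exact_mod_cast congrArg (Int.cast : ℤ → R) hb
  have huN : u * N = N := by linear_combination hpow hA m + (a : R) * hN - N * ha'
  have hvN : v * N = N := by linear_combination hpow hB m + (b : R) * hN - N * hb'
  set d : ℤ := c + a * l ^ m + b * k ^ m + a * b * n
  have huv : u * v = 1 + d * N := by
    have hABm : A ^ m * B ^ m = (1 + N) ^ m := by rw [← mul_pow, hAB]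
    push_cast [d]
    linear_combination hABm + hc + (a : R) * hpow hB m + (b : R) * hpow hA m + (a * b : R) * hN
  -- `u * v = 1 + d * N` and `u * v * N = N`, so `d * N` squares to zero.
  have hdN : (d : R) * N * N = 0 := by linear_combination u * hvN - N * huv + huN
  have hnil : IsNilpotent ((d : R) * N) := ⟨2, by linear_combination (d : R) * hdN⟩
  exact ⟨a, isUnit_of_mul_isUnit_left (huv ▸ hnil.isUnit_one_add)⟩

theorem mul_geom_sum_of_pow_eq_one {x : R} {n : ℕ} (hx : x ^ n = 1) :
    x * ∑ i ∈ range n, x ^ i = ∑ i ∈ range n, x ^ i := by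
  linear_combination mul_geom_sum x n + hx

theorem sum_pow_mul_geom_sum_of_pow_eq_one {x : R} {n : ℕ} (hx : x ^ n = 1) (s : Finset ℕ)
    (f : ℕ → ℕ) : (∑ j ∈ s, x ^ f j) * ∑ i ∈ range n, x ^ i = #s * ∑ i ∈ range n, x ^ i := by
  have hpow (j : ℕ) : x ^ j * ∑ i ∈ range n, x ^ i = ∑ i ∈ range n, x ^ i := by
    induction j with
    | zero => rw [pow_zero, one_mul]
    | succ j ih => rw [pow_succ, mul_assoc, mul_geom_sum_of_pow_eq_one hx, ih]
  simp [sum_mul, hpow]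

theorem geom_sum_mul_geom_sum_pow (x : R) (k l : ℕ) :
    (∑ i ∈ range k, x ^ i) * ∑ j ∈ range l, (x ^ k) ^ j = ∑ i ∈ range (k * l), x ^ i := by
  induction l with
  | zero => simp
  | succ l ih =>
    rw [sum_range_succ, mul_add, ih, Nat.mul_succ, sum_range_add, sum_mul]
    simp_rw [← pow_mul, ← pow_add, add_comm]

theorem exists_isUnit_geom_sum_pow_add_mul {x : R} {n k l m : ℕ} (hx : x ^ n = 1)
    (hkl : k * l = n + 1) (hk : (k : ℤ) ^ m ≡ 1 [ZMOD n]) :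
    ∃ a : ℤ, IsUnit ((∑ i ∈ range k, x ^ i) ^ m + a * ∑ i ∈ range n, x ^ i) := by
  have hN := sum_pow_mul_geom_sum_of_pow_eq_one hx (range n) id
  have hA := sum_pow_mul_geom_sum_of_pow_eq_one hx (range k) id
  have hB := sum_pow_mul_geom_sum_of_pow_eq_one hx (range l) (k * ·)
  simp only [card_range, id, pow_mul] at hN hA hB
  refine exists_isUnit_pow_add_mul (B := ∑ j ∈ range l, (x ^ k) ^ j) (l := l) m
    (by exact_mod_cast hN) (by exact_mod_cast hA) (by exact_mod_cast hB) ?_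
    (by exact_mod_cast hkl) hk
  rw [geom_sum_mul_geom_sum_pow, hkl, geom_sum_succ', hx, add_comm]

end BassUnit

theorem infinite_units_of_norm_map_ne_one {R : Type*} [Ring R] (φ : R →+* ℂ) (u : Rˣ)
    (hu : ‖φ u‖ ≠ 1) : Infinite Rˣ := by
  by_contra hfin
  have : Finite Rˣ := not_infinite_iff_finite.mp hfin
  obtain ⟨t, ht, hut⟩ := (isOfFinOrder_of_finite u).exists_pow_eq_one
  refine hu (Complex.norm_eq_one_of_pow_eq_one ?_ ht.ne')
  rw [← map_pow, ← Units.val_pow_eq_pow_val, hut, Units.val_one, map_one]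

theorem one_lt_norm_geom_sum_exp {n k : ℕ} (hn : 5 ≤ n) (hk : 2 ≤ k) (hkn : 4 * k ≤ n + 4) :
    1 < ‖∑ i ∈ range k, Complex.exp (2 * Real.pi * Complex.I / n) ^ i‖ := by
  have hre (i : ℕ) :
      (Complex.exp (2 * Real.pi * Complex.I / n) ^ i).re = Real.cos (2 * Real.pi * i / n) := by
    rw [← Complex.exp_nat_mul, ← Complex.exp_ofReal_mul_I_re]
    congr 2
    push_cast
    ring
  have hn0 : (0 : ℝ) < n := by positivity
  have hcos_nonneg : ∀ i ∈ range k, 0 ≤ Real.cos (2 * Real.pi * i / n) := by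
    intro i hi
    have : (4 * i : ℝ) ≤ n := by
      have := mem_range.mp hi
      exact_mod_cast (by omega : 4 * i ≤ n)
    apply Real.cos_nonneg_of_mem_Icc
    constructor
    · have : 0 ≤ 2 * Real.pi * i / n := by positivity
      linarith [Real.pi_pos]
    · rw [div_le_iff₀ hn0]
      nlinarith [Real.pi_pos]
  have hcos_one : 0 < Real.cos (2 * Real.pi * (1 : ℕ) / n) := by
    have : (5 : ℝ) ≤ n := by exact_mod_cast hn
    apply Real.cos_pos_of_mem_Ioo
    constructor
    · have : 0 ≤ 2 * Real.pi * (1 : ℕ) / n := by positivity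
      linarith [Real.pi_pos]
    · rw [div_lt_iff₀ hn0]
      push_cast
      nlinarith [Real.pi_pos]
  calc (1 : ℝ) < ∑ i ∈ ({0, 1} : Finset ℕ), Real.cos (2 * Real.pi * i / n) := by
        simpa using hcos_one
    _ ≤ ∑ i ∈ range k, Real.cos (2 * Real.pi * i / n) :=
        sum_le_sum_of_subset_of_nonneg (by intro i; simp; omega) fun i hi _ => hcos_nonneg i hi
    _ = (∑ i ∈ range k, Complex.exp (2 * Real.pi * Complex.I / n) ^ i).re := by
        simp only [Complex.re_sum, hre]
    _ ≤ _ := Complex.re_le_norm _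

theorem normSq_eq_one_of_forall_normSq_eq_intCast {R F : Type*} [Ring R] [FunLike F R ℂ]
    [RingHomClass F R ℂ] (φ : F) (hφ : ∀ x, ∃ c : ℤ, Complex.normSq (φ x) = c) (u : Rˣ) :
    Complex.normSq (φ u) = 1 := by
  obtain ⟨c, hc⟩ := hφ u
  obtain ⟨c', hc'⟩ := hφ ↑u⁻¹
  have hcc' : c * c' = 1 := by
    have := congrArg Complex.normSq (congrArg φ u.mul_inv)
    rw [map_mul, map_mul, hc, hc', map_one, map_one] at this
    exact_mod_cast this
  have hc0 : 0 ≤ c := by exact_mod_cast hc ▸ Complex.normSq_nonneg _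
  rw [hc, Int.eq_one_of_mul_eq_one_right hc0 hcc', Int.cast_one]

theorem Complex.normSq_intCast_add_mul {θ : ℂ} {t s : ℤ} (ht : θ + conj θ = t)
    (hs : θ * conj θ = s) (a b : ℤ) :
    Complex.normSq (a + b * θ) = ((a ^ 2 + t * a * b + s * b ^ 2 : ℤ) : ℝ) := by
  apply Complex.ofReal_injective
  rw [← Complex.mul_conj]
  push_cast
  simp only [map_add, map_mul, map_intCast]
  linear_combination (a * b : ℂ) * ht + (b ^ 2 : ℂ) * hs

theorem Complex.exists_eq_intCast_add_mul_of_pow_four_eq_one {θ z : ℂ} (hθ : θ ^ 2 = -1)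
    (hz : z ^ 4 = 1) : ∃ a b : ℤ, z = a + b * θ := by
  have h : (z - 1) * (z + 1) * (z - θ) * (z + θ) = 0 := by
    linear_combination hz - (z ^ 2 - 1) * hθ
  rcases mul_eq_zero.mp h with h | h
  · rcases mul_eq_zero.mp h with h | h
    · rcases mul_eq_zero.mp h with h | h
      · exact ⟨1, 0, by push_cast; linear_combination h⟩
      · exact ⟨-1, 0, by push_cast; linear_combination h⟩
    · exact ⟨0, 1, by push_cast; linear_combination h⟩
  · exact ⟨0, -1, by push_cast; linear_combination h⟩

theorem Complex.exists_eq_intCast_add_mul_of_pow_three_eq_one {θ z : ℂ}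
    (hθ : θ ^ 2 + θ + 1 = 0) (hz : z ^ 3 = 1) : ∃ a b : ℤ, z = a + b * θ := by
  have h : (z - 1) * (z - θ) * (z + 1 + θ) = 0 := by linear_combination hz + (1 - z) * hθ
  rcases mul_eq_zero.mp h with h | h
  · rcases mul_eq_zero.mp h with h | h
    · exact ⟨1, 0, by push_cast; linear_combination h⟩
    · exact ⟨0, 1, by push_cast; linear_combination h⟩
  · exact ⟨-1, -1, by push_cast; linear_combination h⟩

theorem CommGroup.exists_monoidHom_apply_eq {G : Type*} [CommGroup G] [Finite G] (g : G)
    {ζ : ℂˣ} (hζ : ζ ^ orderOf g = 1) : ∃ χ : G →* ℂˣ, χ g = ζ := by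
  let g' : Subgroup.zpowers g := ⟨g, Subgroup.mem_zpowers g⟩
  have hgen : ∀ y, y ∈ Subgroup.zpowers g' := by
    rintro ⟨y, k, rfl⟩
    exact ⟨k, Subtype.ext (by simp [g'])⟩
  have hord : orderOf ζ ∣ orderOf g' := by
    rw [Subgroup.orderOf_mk]
    exact orderOf_dvd_of_pow_eq_one hζ
  obtain ⟨χ, hχ⟩ := MonoidHom.domRestrict_surjective ℂ (Subgroup.zpowers g)
    (monoidHomOfForallMemZpowers hgen hord)
  refine ⟨χ, ?_⟩
  have := DFunLike.congr_fun hχ g'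
  rwa [monoidHomOfForallMemZpowers_apply_gen] at this

theorem CommGroup.sum_monoidHom_units_apply {G : Type*} [CommGroup G] [Fintype G]
    [Fintype (G →* ℂˣ)] [DecidableEq G] (a : G) :
    ∑ χ : G →* ℂˣ, (χ a : ℂ) = if a = 1 then (Fintype.card G : ℂ) else 0 := by
  have hf : (Units.coeHom ℂ).comp (MonoidHom.eval a) = 1 ↔ a = 1 := by
    rw [← CommGroup.forall_apply_eq_apply_iff G (M := ℂ) (g' := 1), DFunLike.ext_iff]
    simp only [MonoidHom.comp_apply, MonoidHom.eval_apply_apply, Units.coeHom_apply,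
      MonoidHom.one_apply, map_one, Units.val_eq_one]
  have hcard : Fintype.card (G →* ℂˣ) = Fintype.card G := by
    simp only [Fintype.card_eq_nat_card, CommGroup.card_monoidHom_of_hasEnoughRootsOfUnity]
  have h := sum_hom_units ((Units.coeHom ℂ).comp (MonoidHom.eval a))
  simp only [MonoidHom.comp_apply, MonoidHom.eval_apply_apply, Units.coeHom_apply, hf,
    hcard] at h
  rw [h]
  split_ifs <;> simp

theorem IsPGroup.exists_orderOf_eq_eight_or_odd {p : ℕ} (hp : p.Prime) {G : Type*}
    [CommGroup G] [Finite G] (hpG : IsPGroup p G) (h : 5 ≤ Monoid.exponent G) :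
    ∃ g : G, orderOf g = 8 ∨ Odd (orderOf g) ∧ 5 ≤ orderOf g := by
  have := Fact.mk hp
  obtain ⟨g, hg⟩ := Monoid.exists_orderOf_eq_exponent (Monoid.ExponentExists.of_finite (G := G))
  obtain ⟨j, hj⟩ := IsPGroup.iff_orderOf.mp hpG g
  rw [← hg, hj] at h
  rcases hp.eq_two_or_odd' with rfl | hodd
  · have hj3 : 3 ≤ j := by
      by_contra! hj3
      have : 2 ^ j ≤ 2 ^ 2 := Nat.pow_le_pow_right two_pos (by omega)
      omega
    refine ⟨g ^ (orderOf g / 8), Or.inl (orderOf_pow_orderOf_div (orderOf_pos g).ne' ?_)⟩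
    rw [hj]
    exact pow_dvd_pow 2 hj3
  · exact ⟨g, Or.inr ⟨hj ▸ hodd.pow, hj ▸ h⟩⟩

section CyclicQuotient

variable {G : Type*} [CommGroup G] [Finite G]

theorem CommGroup.exists_isCyclic_quotient_orderOf_le_card (g : G) :
    ∃ K : Subgroup G, IsCyclic (G ⧸ K) ∧ orderOf g ≤ Nat.card (G ⧸ K) := by
  have hζ := Complex.isPrimitiveRoot_exp (orderOf g) (orderOf_pos g).ne'
  have hζu := hζ.isUnit_unit (orderOf_pos g).ne'
  obtain ⟨χ, hχ⟩ := CommGroup.exists_monoidHom_apply_eq g hζu.pow_eq_one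
  let e := QuotientGroup.quotientKerEquivRange χ
  have : Finite χ.range := Finite.of_surjective _ χ.rangeRestrict_surjective
  refine ⟨χ.ker, isCyclic_of_surjective e.symm e.symm.surjective, ?_⟩
  rw [Nat.card_congr e.toEquiv, hζu.eq_orderOf, ← hχ]
  exact (Subgroup.orderOf_mk (χ g) (χ.mem_range.2 ⟨g, rfl⟩)).symm.trans_le orderOf_le_card

theorem CommGroup.exists_isCyclic_quotient_le_card_iff (n : ℕ) :
    (∃ K : Subgroup G, IsCyclic (G ⧸ K) ∧ n ≤ Nat.card (G ⧸ K)) ↔ n ≤ Monoid.exponent G := by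
  constructor
  · rintro ⟨K, hK, hn⟩
    rw [← IsCyclic.exponent_eq_card] at hn
    exact hn.trans (Nat.le_of_dvd (Nat.pos_of_ne_zero Monoid.exponent_ne_zero_of_finite)
      (Group.exponent_quotient_dvd K))
  · intro hn
    obtain ⟨g, hg⟩ := Monoid.exists_orderOf_eq_exponent (Monoid.ExponentExists.of_finite (G := G))
    obtain ⟨K, hK, hcard⟩ := exists_isCyclic_quotient_orderOf_le_card g
    exact ⟨K, hK, hn.trans (hg ▸ hcard)⟩

end CyclicQuotient

namespace MonoidAlgebra

variable {G : Type*} [CommGroup G]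

theorem lift_apply_eq_sum [Fintype G] {A : Type*} [Ring A] (χ : G →* A)
    (x : MonoidAlgebra ℤ G) :
    lift ℤ A G χ x = ∑ g, x.coeff g * χ g := by
  rw [lift_apply, Finsupp.sum_fintype _ _ (by simp)]
  simp [zsmul_eq_mul]

theorem sum_normSq_lift_eq_card_mul_sum_sq [Fintype G] [Fintype (G →* ℂˣ)]
    (x : MonoidAlgebra ℤ G) :
    ∑ χ : G →* ℂˣ, Complex.normSq (lift ℤ ℂ G ((Units.coeHom ℂ).comp χ) x)
      = Fintype.card G * ∑ g, (x.coeff g : ℝ) ^ 2 := by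
  classical
  have hconj (χ : G →* ℂˣ) (g : G) : conj (χ g : ℂ) = (χ g⁻¹ : ℂ) := by
    have h1 : ‖(χ g : ℂ)‖ = 1 := Complex.norm_eq_one_of_pow_eq_one
      (by rw [← Units.val_pow_eq_pow_val, ← map_pow, pow_card_eq_one, map_one, Units.val_one])
      Fintype.card_ne_zero
    rw [map_inv, Units.val_inv_eq_inv_val, Complex.inv_eq_conj h1]
  apply Complex.ofReal_injective
  push_cast
  simp_rw [← Complex.mul_conj, lift_apply_eq_sum, map_sum, map_mul, map_intCast,
    MonoidHom.comp_apply, Units.coeHom_apply, hconj, Finset.sum_mul_sum]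
  calc ∑ χ : G →* ℂˣ, ∑ g : G, ∑ h : G, (x.coeff g : ℂ) * χ g * (x.coeff h * χ h⁻¹)
      = ∑ g : G, ∑ h : G, (x.coeff g : ℂ) * x.coeff h * ∑ χ : G →* ℂˣ, (χ (g * h⁻¹) : ℂ) := by
        rw [sum_comm]
        refine sum_congr rfl fun g _ => ?_
        rw [sum_comm]
        refine sum_congr rfl fun h _ => ?_
        rw [mul_sum]
        refine sum_congr rfl fun χ _ => ?_
        rw [map_mul, Units.val_mul]
        ring
    _ = ∑ g : G, (x.coeff g : ℂ) * x.coeff g * Fintype.card G := by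
        refine sum_congr rfl fun g _ => ?_
        simp only [CommGroup.sum_monoidHom_units_apply, mul_inv_eq_one, mul_ite, mul_zero,
          sum_ite_eq, mem_univ, if_true]
    _ = _ := by
        rw [mul_sum]
        exact sum_congr rfl fun g _ => by ring

theorem infinite_units_of_orderOf_eq [Finite G] {g : G} {n k l m : ℕ} (hg : orderOf g = n)
    (hn : 5 ≤ n) (hk : 2 ≤ k) (hkn : 4 * k ≤ n + 4)
    (hkl : k * l = n + 1) (hm : m ≠ 0) (hkm : (k : ℤ) ^ m ≡ 1 [ZMOD n]) :
    Infinite (MonoidAlgebra ℤ G)ˣ := by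
  set ζ := Complex.exp (2 * Real.pi * Complex.I / n)
  have hζ : IsPrimitiveRoot ζ n := Complex.isPrimitiveRoot_exp n (by omega)
  obtain ⟨χ, hχ⟩ := CommGroup.exists_monoidHom_apply_eq g (ζ := (hζ.isUnit (by omega)).unit)
    (by ext; simp [hg, hζ.pow_eq_one])
  let φ := (lift ℤ ℂ G ((Units.coeHom ℂ).comp χ)).toRingHom
  have hφ : φ (of ℤ G g) = ζ := by simp [φ, hχ]
  obtain ⟨a, hu⟩ := exists_isUnit_geom_sum_pow_add_mul (x := of ℤ G g)
    (by rw [← map_pow, ← hg, pow_orderOf_eq_one, map_one]) hkl hkm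
  refine infinite_units_of_norm_map_ne_one φ hu.unit (ne_of_gt ?_)
  rw [hu.unit_spec]
  simp only [map_add, map_mul, map_pow, map_sum, map_intCast, hφ, hζ.geom_sum_eq_zero (by omega),
    mul_zero, add_zero, norm_pow]
  exact one_lt_pow₀ (one_lt_norm_geom_sum_exp hn hk hkn) hm

theorem infinite_units_of_five_le_exponent {p : ℕ} (hp : p.Prime) [Finite G]
    (hpG : IsPGroup p G) (h : 5 ≤ Monoid.exponent G) : Infinite (MonoidAlgebra ℤ G)ˣ := by
  obtain ⟨g, hg | ⟨⟨r, hr⟩, h5⟩⟩ := hpG.exists_orderOf_eq_eight_or_odd hp h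
  · exact infinite_units_of_orderOf_eq (k := 3) (l := 3) (m := 2) hg (by norm_num) (by norm_num)
      (by norm_num) (by norm_num) (by norm_num) (by decide)
  · refine infinite_units_of_orderOf_eq (k := 2) (l := r + 1) (m := (orderOf g).totient) rfl h5
      le_rfl (by omega) (by omega) (Nat.totient_pos.mpr (by omega)).ne' ?_
    have hcop : Nat.Coprime 2 (orderOf g) := Nat.coprime_two_left.mpr ⟨r, hr⟩
    exact_mod_cast Int.natCast_modEq_iff.mpr (Nat.ModEq.pow_totient hcop)

theorem finite_units_of_forall_pow_eq_one [Fintype G] {θ : ℂ} {t s : ℤ} {e : ℕ}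
    (ht : θ + conj θ = t) (hs : θ * conj θ = s) (hG : ∀ g : G, g ^ e = 1)
    (hroots : ∀ z : ℂ, z ^ e = 1 → ∃ a b : ℤ, z = a + b * θ) :
    Finite (MonoidAlgebra ℤ G)ˣ := by
  have := Fintype.ofFinite (G →* ℂˣ)
  have hint (χ : G →* ℂˣ) (x : MonoidAlgebra ℤ G) :
      ∃ c : ℤ, Complex.normSq (lift ℤ ℂ G ((Units.coeHom ℂ).comp χ) x) = c := by
    choose a b hab using fun g => hroots (χ g)
      (by rw [← Units.val_pow_eq_pow_val, ← map_pow, hG, map_one, Units.val_one])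
    have hx : lift ℤ ℂ G ((Units.coeHom ℂ).comp χ) x
        = ((∑ g, x.coeff g * a g : ℤ) : ℂ) + (∑ g, x.coeff g * b g : ℤ) * θ := by
      simp only [lift_apply_eq_sum, MonoidHom.comp_apply, Units.coeHom_apply, hab]
      push_cast
      rw [sum_mul, ← sum_add_distrib]
      exact sum_congr rfl fun g _ => by ring
    exact ⟨_, hx ▸ Complex.normSq_intCast_add_mul ht hs _ _⟩
  have hsq (u : (MonoidAlgebra ℤ G)ˣ) : ∑ g, u.val.coeff g ^ 2 = 1 := by
    have h := sum_normSq_lift_eq_card_mul_sum_sq u.val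
    rw [sum_congr rfl fun χ _ => normSq_eq_one_of_forall_normSq_eq_intCast
      (lift ℤ ℂ G ((Units.coeHom ℂ).comp χ)) (hint χ) u, sum_const, card_univ,
      ← Nat.card_eq_fintype_card, CommGroup.card_monoidHom_of_hasEnoughRootsOfUnity,
      Nat.card_eq_fintype_card, nsmul_eq_mul, mul_one] at h
    have hG0 : (Fintype.card G : ℝ) ≠ 0 := by positivity
    exact_mod_cast mul_right_injective₀ hG0 (h.symm.trans (mul_one _).symm)
  have hmem (u : (MonoidAlgebra ℤ G)ˣ) (g : G) : u.val.coeff g ∈ Set.Icc (-1 : ℤ) 1 := by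
    have : u.val.coeff g ^ 2 ≤ 1 := hsq u ▸ single_le_sum (f := fun g => u.val.coeff g ^ 2)
      (fun _ _ => sq_nonneg _) (mem_univ g)
    exact abs_le.mp ((sq_le_one_iff_abs_le_one _).mp this)
  exact Finite.of_injective (fun u g => (⟨u.val.coeff g, hmem u g⟩ : Set.Icc (-1 : ℤ) 1))
    fun u v huv => Units.ext (MonoidAlgebra.ext (Finsupp.ext fun g =>
      congrArg Subtype.val (congrFun huv g)))

theorem finite_units_of_exponent_le_four [Fintype G] (h : Monoid.exponent G ≤ 4) :
    Finite (MonoidAlgebra ℤ G)ˣ := by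
  have hpos := Nat.pos_of_ne_zero (Monoid.exponent_ne_zero_of_finite (G := G))
  have : Monoid.exponent G ∣ 4 ∨ Monoid.exponent G ∣ 3 := by
    interval_cases Monoid.exponent G <;> norm_num
  rcases this with h4 | h3
  · exact finite_units_of_forall_pow_eq_one (θ := Complex.I) (t := 0) (s := 1) (by simp)
      (by simp) (Monoid.exponent_dvd_iff_forall_pow_eq_one.mp h4)
      fun z hz => Complex.exists_eq_intCast_add_mul_of_pow_four_eq_one Complex.I_sq hz
  · let ω : ℂ := ⟨-1 / 2, √3 / 2⟩
    have ht : ω + conj ω = (-1 : ℤ) := by apply Complex.ext <;> simp [ω]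
    have hs : ω * conj ω = (1 : ℤ) := by
      apply Complex.ext <;> simp [ω] <;> ring_nf
      norm_num
    exact finite_units_of_forall_pow_eq_one ht hs (Monoid.exponent_dvd_iff_forall_pow_eq_one.mp h3)
      fun z hz => Complex.exists_eq_intCast_add_mul_of_pow_three_eq_one
        (by push_cast at ht hs; linear_combination ω * ht - hs) hz

end MonoidAlgebra

/-- Let `p` be a prime and `G` a finite abelian `p`-group.  Then the unit
group `𝒰(ℤ[G])` of the integral group ring has nonzero rank -- equivalently, it is
infinite -- if and only if `G` has a cyclic quotient of order at least `5`, equivalently if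
and only if the exponent of `G` is at least `5`. -/
theorem units_of_integral_group_ring_of_abelian_pGroup_infinite_iff
    (p : ℕ) (hp : p.Prime) (G : Type*) [CommGroup G] [Fintype G]
    (hpG : IsPGroup p G) :
    (Infinite (MonoidAlgebra ℤ G)ˣ ↔
      ∃ K : Subgroup G, IsCyclic (G ⧸ K) ∧ 5 ≤ Nat.card (G ⧸ K)) ∧
    (Infinite (MonoidAlgebra ℤ G)ˣ ↔ 5 ≤ Monoid.exponent G) := by
  have hexp : Infinite (MonoidAlgebra ℤ G)ˣ ↔ 5 ≤ Monoid.exponent G :=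
    ⟨fun hinf => not_lt.mp fun hlt =>
      not_finite_iff_infinite.mpr hinf (finite_units_of_exponent_le_four (by omega)),
      infinite_units_of_five_le_exponent hp hpG⟩
  exact ⟨hexp.trans (CommGroup.exists_isCyclic_quotient_le_card_iff 5).symm, hexp⟩
end
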